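/- Let n, k, r ≥ 0, let τ be a finite relational vocabulary, and for i ∈ {1,2} let A_i be a τ-structure and ā_i an r-tuple from A_i. Then the following are equivalent: (1) the Duplicator has a winning strategy in the (n,k)-tree-prefix game on {(A₁,ā₁),(A₂,ā₂)}; (2) (A₁,ā₁) ≡_{(n,k)} (A₂,ā₂), i.e., (A₁,ā₁) and (A₂,ā₂) agree on all tΣ_{(n,k)} formulae φ(x̄) with |x̄| = r. -/

import Mathlib

namespace FV

open Cardinal

/-- A (finite) relational vocabulary: a type of relation symbols with arities. -/
structure Vocab : Type 1 where
  Rel : Type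
  arity : Rel → ℕ

/-- A structure over a relational vocabulary. -/
structure Struc (τ : Vocab) : Type 1 where
  carrier : Type
  rel : ∀ R : τ.Rel, (Fin (τ.arity R) → carrier) → Prop

/-- Infinitary formulae in negation normal form over a relational vocabulary,
with free variables among `Fin n`. -/
inductive Formula (τ : Vocab) : ℕ → Type 1 where
  | tru {n : ℕ} : Formula τ n
  | fls {n : ℕ} : Formula τ n
  | rel {n : ℕ} (R : τ.Rel) (ts : Fin (τ.arity R) → Fin n) : Formula τ n
  | nrel {n : ℕ} (R : τ.Rel) (ts : Fin (τ.arity R) → Fin n) : Formula τ n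
  | eq {n : ℕ} (i j : Fin n) : Formula τ n
  | neq {n : ℕ} (i j : Fin n) : Formula τ n
  | iAnd {n : ℕ} (I : Type) (f : I → Formula τ n) : Formula τ n
  | iOr {n : ℕ} (I : Type) (f : I → Formula τ n) : Formula τ n
  | ex {n : ℕ} (φ : Formula τ (n+1)) : Formula τ n
  | all {n : ℕ} (φ : Formula τ (n+1)) : Formula τ n

/-- Binary conjunction (a conjunction of arity 2). -/
def Formula.and {τ : Vocab} {n : ℕ} (φ ψ : Formula τ n) : Formula τ n :=
  Formula.iAnd Bool (fun b => if b then φ else ψ)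

/-- Binary disjunction (a disjunction of arity 2). -/
def Formula.or {τ : Vocab} {n : ℕ} (φ ψ : Formula τ n) : Formula τ n :=
  Formula.iOr Bool (fun b => if b then φ else ψ)

/-- Quantifier-free formulae (in NNF, with finite conjunctions/disjunctions). -/
inductive IsQF {τ : Vocab} : ∀ {n : ℕ}, Formula τ n → Prop where
  | tru {n : ℕ} : IsQF (Formula.tru (τ := τ) (n := n))
  | fls {n : ℕ} : IsQF (Formula.fls (τ := τ) (n := n))
  | rel {n : ℕ} (R : τ.Rel) (ts : Fin (τ.arity R) → Fin n) : IsQF (Formula.rel R ts)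
  | nrel {n : ℕ} (R : τ.Rel) (ts : Fin (τ.arity R) → Fin n) : IsQF (Formula.nrel R ts)
  | eq {n : ℕ} (i j : Fin n) : IsQF (Formula.eq (τ := τ) i j)
  | neq {n : ℕ} (i j : Fin n) : IsQF (Formula.neq (τ := τ) i j)
  | iAnd {n : ℕ} (I : Type) (hI : Finite I) (f : I → Formula τ n)
      (h : ∀ i, IsQF (f i)) : IsQF (Formula.iAnd I f)
  | iOr {n : ℕ} (I : Type) (hI : Finite I) (f : I → Formula τ n)
      (h : ∀ i, IsQF (f i)) : IsQF (Formula.iOr I f)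

/-- Satisfaction of a formula in a structure under an assignment. -/
def Sat {τ : Vocab} (A : Struc τ) : ∀ {n : ℕ}, Formula τ n → (Fin n → A.carrier) → Prop
  | _, .tru, _ => True
  | _, .fls, _ => False
  | _, .rel R ts, v => A.rel R (fun i => v (ts i))
  | _, .nrel R ts, v => ¬ A.rel R (fun i => v (ts i))
  | _, .eq i j, v => v i = v j
  | _, .neq i j, v => v i ≠ v j
  | _, .iAnd I f, v => ∀ i : I, Sat A (f i) v
  | _, .iOr I f, v => ∃ i : I, Sat A (f i) v
  | _, .ex φ, v => ∃ a, Sat A φ (Fin.snoc v a)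
  | _, .all φ, v => ∀ a, Sat A φ (Fin.snoc v a)

/-- The empty assignment. -/
def emptyA {α : Type} : Fin 0 → α := fun i => i.elim0

/-- The (quantifier) rank of a formula: the supremum of the number of quantifiers
on any root-to-leaf path of its parse tree. -/
noncomputable def rank {τ : Vocab} : ∀ {n : ℕ}, Formula τ n → Cardinal
  | _, .iAnd I f => ⨆ i : I, rank (f i)
  | _, .iOr I f => ⨆ i : I, rank (f i)
  | _, .ex φ => rank φ + 1
  | _, .all φ => rank φ + 1
  | _, _ => 0

/-- The size of a formula (number of nodes of its parse tree), as a cardinal. -/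
noncomputable def sizeC {τ : Vocab} : ∀ {n : ℕ}, Formula τ n → Cardinal
  | _, .iAnd I f => 1 + Cardinal.sum (fun i : I => sizeC (f i))
  | _, .iOr I f => 1 + Cardinal.sum (fun i : I => sizeC (f i))
  | _, .ex φ => 1 + sizeC φ
  | _, .all φ => 1 + sizeC φ
  | _, _ => 1

mutual
/-- The class tΣ_{κ,λ} of formulae. -/
inductive TSigma (τ : Vocab) (κ : Cardinal) : Ordinal → ∀ {n : ℕ}, Formula τ n → Prop where
  | qf {n : ℕ} {φ : Formula τ n} : IsQF φ → TSigma τ κ 0 φ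
  | conj {n : ℕ} {lam : Ordinal} (I : Type) (f : I → Formula τ n)
      (hI : Cardinal.mk I < κ) (lam' : I → Ordinal) (hlt : ∀ i, lam' i < lam)
      (h : ∀ i, TPi τ κ (lam' i) (f i)) : TSigma τ κ lam (Formula.iAnd I f)
  | ex {n : ℕ} {lam : Ordinal} {φ : Formula τ (n+1)} :
      TSigma τ κ lam φ → TSigma τ κ lam (Formula.ex φ)

/-- The class tΠ_{κ,λ} of formulae. -/
inductive TPi (τ : Vocab) (κ : Cardinal) : Ordinal → ∀ {n : ℕ}, Formula τ n → Prop where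
  | qf {n : ℕ} {φ : Formula τ n} : IsQF φ → TPi τ κ 0 φ
  | disj {n : ℕ} {lam : Ordinal} (I : Type) (f : I → Formula τ n)
      (hI : Cardinal.mk I < κ) (lam' : I → Ordinal) (hlt : ∀ i, lam' i < lam)
      (h : ∀ i, TSigma τ κ (lam' i) (f i)) : TPi τ κ lam (Formula.iOr I f)
  | all {n : ℕ} {lam : Ordinal} {φ : Formula τ (n+1)} :
      TPi τ κ lam φ → TPi τ κ lam (Formula.all φ)
end

/-- tΣ_{∞,λ}: union of tΣ_{κ,λ} over all infinite cardinals κ. -/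
def TSigmaInf (τ : Vocab) (lam : Ordinal) {n : ℕ} (φ : Formula τ n) : Prop :=
  ∃ κ : Cardinal, ℵ₀ ≤ κ ∧ TSigma τ κ lam φ

/-- tΠ_{∞,λ}: union of tΠ_{κ,λ} over all infinite cardinals κ. -/
def TPiInf (τ : Vocab) (lam : Ordinal) {n : ℕ} (φ : Formula τ n) : Prop :=
  ∃ κ : Cardinal, ℵ₀ ≤ κ ∧ TPi τ κ lam φ

/-- The λ-fold exponential `tower` function (taking suprema at limits). -/
noncomputable def towerC (κ : Cardinal) (l : Ordinal) : Cardinal :=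
  Ordinal.limitRecOn l κ (fun _ ih => (2 : Cardinal) ^ ih)
    (fun o _ ih => ⨆ i : {o' : Ordinal // o' < o}, ih i.1 i.2)

/-- The n-fold exponential `tower` function on naturals. -/
def towerN : ℕ → Cardinal → Cardinal
  | 0, k => k
  | n+1, k => (2 : Cardinal) ^ towerN n k

open Classical in
/-- ρ(κ,λ) = tower(λ,κ) if κ > ω, else ω. -/
noncomputable def rho (κ : Cardinal) (lam : Ordinal) : Cardinal :=
  if ℵ₀ < κ then towerC κ lam else ℵ₀

/-- ∞-propositional formulae over a set `V` of propositional variables. -/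
inductive PropForm (V : Type) : Type 1 where
  | var (v : V) : PropForm V
  | not (p : PropForm V) : PropForm V
  | iAnd (I : Type) (f : I → PropForm V) : PropForm V
  | iOr (I : Type) (f : I → PropForm V) : PropForm V

/-- Binary conjunction of propositional formulae. -/
def PropForm.and {V : Type} (p q : PropForm V) : PropForm V :=
  PropForm.iAnd Bool (fun b => if b then p else q)

/-- Binary disjunction of propositional formulae. -/
def PropForm.or {V : Type} (p q : PropForm V) : PropForm V :=
  PropForm.iOr Bool (fun b => if b then p else q)

/-- Evaluation of an ∞-propositional formula under an assignment. -/
def PropForm.eval {V : Type} (ζ : V → Bool) : PropForm V → Prop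
  | .var v => ζ v = true
  | .not p => ¬ PropForm.eval ζ p
  | .iAnd _ f => ∀ i, PropForm.eval ζ (f i)
  | .iOr _ f => ∃ i, PropForm.eval ζ (f i)

/-- Negation-free ∞-propositional formulae. -/
inductive PropForm.NegFree {V : Type} : PropForm V → Prop where
  | var (v : V) : PropForm.NegFree (.var v)
  | iAnd (I : Type) (f : I → PropForm V) (h : ∀ i, PropForm.NegFree (f i)) :
      PropForm.NegFree (.iAnd I f)
  | iOr (I : Type) (f : I → PropForm V) (h : ∀ i, PropForm.NegFree (f i)) :
      PropForm.NegFree (.iOr I f)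

/-- Finitary (ordinary) propositional formulae. -/
inductive PropForm.Finitary {V : Type} : PropForm V → Prop where
  | var (v : V) : PropForm.Finitary (.var v)
  | not (p : PropForm V) (h : PropForm.Finitary p) : PropForm.Finitary (.not p)
  | iAnd (I : Type) (hI : Finite I) (f : I → PropForm V)
      (h : ∀ i, PropForm.Finitary (f i)) : PropForm.Finitary (.iAnd I f)
  | iOr (I : Type) (hI : Finite I) (f : I → PropForm V)
      (h : ∀ i, PropForm.Finitary (f i)) : PropForm.Finitary (.iOr I f)

/-- Size of an ∞-propositional formula. -/
noncomputable def PropForm.size {V : Type} : PropForm V → Cardinal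
  | .var _ => 1
  | .not p => 1 + PropForm.size p
  | .iAnd I f => 1 + Cardinal.sum (fun i : I => PropForm.size (f i))
  | .iOr I f => 1 + Cardinal.sum (fun i : I => PropForm.size (f i))

/-- A reduction sequence `D(x̄₁, x̄₂) = (Δ₁(x̄₁), Δ₂(x̄₂), β)` over τ. -/
structure RedSeq (τ : Vocab) (r₁ r₂ : ℕ) : Type 1 where
  I : Type
  Δ₁ : I → Formula τ r₁
  Δ₂ : I → Formula τ r₂
  β : PropForm (I × Fin 2)

/-- `(A₁, A₂, ā₁, ā₂)` is a model of the reduction sequence `D`. -/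
def RedSeq.Models {τ : Vocab} {r₁ r₂ : ℕ} (D : RedSeq τ r₁ r₂) (A₁ A₂ : Struc τ)
    (a₁ : Fin r₁ → A₁.carrier) (a₂ : Fin r₂ → A₂.carrier) : Prop :=
  ∃ ζ : D.I × Fin 2 → Bool, D.β.eval ζ ∧
    (∀ i : D.I, (ζ (i, 0) = true ↔ Sat A₁ (D.Δ₁ i) a₁)) ∧
    (∀ i : D.I, (ζ (i, 1) = true ↔ Sat A₂ (D.Δ₂ i) a₂))

/-- Size of a reduction sequence. -/
noncomputable def RedSeq.size {τ : Vocab} {r₁ r₂ : ℕ} (D : RedSeq τ r₁ r₂) : Cardinal :=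
  Cardinal.sum (fun i : D.I => sizeC (D.Δ₁ i)) +
    Cardinal.sum (fun i : D.I => sizeC (D.Δ₂ i)) + D.β.size

/-- The vocabulary τ̱ = τ ∪ {P} for a new unary predicate P (represented by `none`). -/
def annotV (τ : Vocab) : Vocab where
  Rel := Option τ.Rel
  arity := fun R => match R with
    | none => 1
    | some S => τ.arity S

/-- The annotated disjoint union of two τ-structures: their disjoint union,
expanded by interpreting the new unary predicate P as the universe of the first. -/
def adu {τ : Vocab} (A₁ A₂ : Struc τ) : Struc (annotV τ) where
  carrier := A₁.carrier ⊕ A₂.carrier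
  rel := fun R => match R with
    | none => fun v => (v ⟨0, Nat.one_pos⟩).isLeft = true
    | some S => fun v =>
        (∃ w : Fin (τ.arity S) → A₁.carrier, A₁.rel S w ∧ v = fun i => Sum.inl (w i)) ∨
        (∃ w : Fin (τ.arity S) → A₂.carrier, A₂.rel S w ∧ v = fun i => Sum.inr (w i))

/-- `D` is a Feferman–Vaught decomposition of `φ(x̄₁,x̄₂)` over annotated disjoint union. -/
def FVDecompADU {τ : Vocab} {r₁ r₂ : ℕ} (φ : Formula (annotV τ) (r₁ + r₂))
    (D : RedSeq τ r₁ r₂) : Prop :=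
  ∀ (A₁ A₂ : Struc τ) (a₁ : Fin r₁ → A₁.carrier) (a₂ : Fin r₂ → A₂.carrier),
    Sat (adu A₁ A₂) φ (Fin.append (fun i => Sum.inl (a₁ i)) (fun i => Sum.inr (a₂ i)))
      ↔ D.Models A₁ A₂ a₁ a₂

/-- `D` is a Feferman–Vaught decomposition of the sentence `φ` over the binary operation `op`. -/
def FVDecompOp {τ : Vocab} (op : Struc τ → Struc τ → Struc τ) (φ : Formula τ 0)
    (D : RedSeq τ 0 0) : Prop :=
  ∀ A₁ A₂ : Struc τ, Sat (op A₁ A₂) φ emptyA ↔ D.Models A₁ A₂ emptyA emptyA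

/-- A quantifier-free scalar (σ,τ)-interpretation. -/
structure QFInterp (σ τ : Vocab) : Type 1 where
  xiU : Formula σ 1
  xiR : ∀ R : τ.Rel, Formula σ (τ.arity R)
  hU : IsQF xiU
  hR : ∀ R : τ.Rel, IsQF (xiR R)

/-- The τ-structure interpreted in a σ-structure by a quantifier-free interpretation. -/
def QFInterp.app {σ τ : Vocab} (Ξ : QFInterp σ τ) (A : Struc σ) : Struc τ where
  carrier := { a : A.carrier // Sat A Ξ.xiU (fun _ => a) }
  rel := fun R v => Sat A (Ξ.xiR R) (fun i => (v i).1)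

/-- The quantifier-free sum-like binary operation defined by a (τ̱,τ)-interpretation. -/
def sumLike {τ : Vocab} (Ξ : QFInterp (annotV τ) τ) (A₁ A₂ : Struc τ) : Struc τ :=
  Ξ.app (adu A₁ A₂)


/-- Relabelling of free variables. -/
def relabel {τ : Vocab} : ∀ {m n : ℕ}, (Fin m → Fin n) → Formula τ m → Formula τ n
  | _, _, _, .tru => .tru
  | _, _, _, .fls => .fls
  | _, _, g, .rel R ts => .rel R (fun i => g (ts i))
  | _, _, g, .nrel R ts => .nrel R (fun i => g (ts i))
  | _, _, g, .eq i j => .eq (g i) (g j)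
  | _, _, g, .neq i j => .neq (g i) (g j)
  | _, _, g, .iAnd I f => .iAnd I (fun i => relabel g (f i))
  | _, _, g, .iOr I f => .iOr I (fun i => relabel g (f i))
  | _, _, g, .ex φ => .ex (relabel (Fin.snoc (fun i => Fin.castSucc (g i)) (Fin.last _)) φ)
  | _, _, g, .all φ => .all (relabel (Fin.snoc (fun i => Fin.castSucc (g i)) (Fin.last _)) φ)

/-- Negation, in negation normal form. -/
def nnfNeg {τ : Vocab} : ∀ {n : ℕ}, Formula τ n → Formula τ n
  | _, .tru => .fls
  | _, .fls => .tru
  | _, .rel R ts => .nrel R ts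
  | _, .nrel R ts => .rel R ts
  | _, .eq i j => .neq i j
  | _, .neq i j => .eq i j
  | _, .iAnd I f => .iOr I (fun i => nnfNeg (f i))
  | _, .iOr I f => .iAnd I (fun i => nnfNeg (f i))
  | _, .ex φ => .all (nnfNeg φ)
  | _, .all φ => .ex (nnfNeg φ)

/-- Finite conjunction of a tuple of formulae. -/
def finAnd {τ : Vocab} {n : ℕ} : ∀ {r : ℕ}, (Fin r → Formula τ n) → Formula τ n
  | 0, _ => .tru
  | r+1, f => (finAnd (fun i => f (Fin.castSucc i))).and (f (Fin.last r))

/-- A block of `k` existential quantifiers. -/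
def exBlock {τ : Vocab} : ∀ (k : ℕ) {r : ℕ}, Formula τ (r + k) → Formula τ r
  | 0, _, φ => φ
  | k+1, _, φ => exBlock k (Formula.ex φ)

/-- A block of `k` universal quantifiers. -/
def allBlock {τ : Vocab} : ∀ (k : ℕ) {r : ℕ}, Formula τ (r + k) → Formula τ r
  | 0, _, φ => φ
  | k+1, _, φ => allBlock k (Formula.all φ)

mutual
/-- The class tΣ_{(n,k)}: tΣ_n formulae all of whose quantifier blocks have length exactly k. -/
inductive SigNK (τ : Vocab) (k : ℕ) : ℕ → ∀ {r : ℕ}, Formula τ r → Prop where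
  | qf {r : ℕ} {φ : Formula τ r} : IsQF φ → SigNK τ k 0 φ
  | blk {r n : ℕ} (hn : 0 < n) (I : Type) (hI : Finite I) (f : I → Formula τ (r + k))
      (n' : I → ℕ) (hlt : ∀ i, n' i < n) (h : ∀ i, PiNK τ k (n' i) (f i)) :
      SigNK τ k n (exBlock k (Formula.iAnd I f))
/-- The class tΠ_{(n,k)}: tΠ_n formulae all of whose quantifier blocks have length exactly k. -/
inductive PiNK (τ : Vocab) (k : ℕ) : ℕ → ∀ {r : ℕ}, Formula τ r → Prop where
  | qf {r : ℕ} {φ : Formula τ r} : IsQF φ → PiNK τ k 0 φ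
  | blk {r n : ℕ} (hn : 0 < n) (I : Type) (hI : Finite I) (f : I → Formula τ (r + k))
      (n' : I → ℕ) (hlt : ∀ i, n' i < n) (h : ∀ i, SigNK τ k (n' i) (f i)) :
      PiNK τ k n (allBlock k (Formula.iOr I f))
end

/-- Partial isomorphism condition on a pair of tuples. -/
def PIso {τ : Vocab} (A₁ A₂ : Struc τ) (r : ℕ)
    (a₁ : Fin r → A₁.carrier) (a₂ : Fin r → A₂.carrier) : Prop :=
  (∀ i j : Fin r, a₁ i = a₁ j ↔ a₂ i = a₂ j) ∧
  (∀ (R : τ.Rel) (ts : Fin (τ.arity R) → Fin r),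
      A₁.rel R (fun l => a₁ (ts l)) ↔ A₂.rel R (fun l => a₂ (ts l)))

/-- The Duplicator has a winning strategy in the (n,k)-prefix game on the ordered pair
((A₁,ā₁),(A₂,ā₂)): in odd rounds the Spoiler picks a k-tuple in A₁ (and the Duplicator
answers in A₂), in even rounds the roles of the structures are swapped; the Duplicator wins
a play if the chosen tuples collectively form a partial isomorphism. -/
def DWinPrefix {τ : Vocab} (k : ℕ) : ℕ → (A₁ A₂ : Struc τ) → (r : ℕ) →
    (Fin r → A₁.carrier) → (Fin r → A₂.carrier) → Prop
  | 0, A₁, A₂, r, a₁, a₂ => PIso A₁ A₂ r a₁ a₂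
  | n+1, A₁, A₂, r, a₁, a₂ =>
      ∀ b₁ : Fin k → A₁.carrier, ∃ b₂ : Fin k → A₂.carrier,
        DWinPrefix k n A₂ A₁ (r + k) (Fin.append a₂ b₂) (Fin.append a₁ b₁)

/-- The Duplicator has a winning strategy in the (n,k)-tree-prefix game on the set
{(A₁,ā₁),(A₂,ā₂)}: in the first round the Spoiler picks a k-tuple in either structure, and
thereafter in the structure in which the Duplicator chose in the previous round. -/
def DWinTree {τ : Vocab} (k : ℕ) : ℕ → (A₁ A₂ : Struc τ) → (r : ℕ) →
    (Fin r → A₁.carrier) → (Fin r → A₂.carrier) → Prop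
  | 0, A₁, A₂, r, a₁, a₂ => PIso A₁ A₂ r a₁ a₂
  | n+1, A₁, A₂, r, a₁, a₂ =>
      (∀ b₁ : Fin k → A₁.carrier, ∃ b₂ : Fin k → A₂.carrier,
        DWinPrefix k n A₂ A₁ (r + k) (Fin.append a₂ b₂) (Fin.append a₁ b₁)) ∧
      (∀ b₂ : Fin k → A₂.carrier, ∃ b₁ : Fin k → A₁.carrier,
        DWinPrefix k n A₁ A₂ (r + k) (Fin.append a₁ b₁) (Fin.append a₂ b₂))

/-- (A₁,ā₁) ⇛_{(n,k)} (A₂,ā₂) : every tΣ_{(n,k)} formula true of (A₁,ā₁) is true of (A₂,ā₂). -/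
def TransferNK {τ : Vocab} (n k : ℕ) (A₁ A₂ : Struc τ) (r : ℕ)
    (a₁ : Fin r → A₁.carrier) (a₂ : Fin r → A₂.carrier) : Prop :=
  ∀ φ : Formula τ r, SigNK τ k n φ → Sat A₁ φ a₁ → Sat A₂ φ a₂

/-- (A₁,ā₁) ≡_{(n,k)} (A₂,ā₂) : agreement on all tΣ_{(n,k)} formulae. -/
def EquivNK {τ : Vocab} (n k : ℕ) (A₁ A₂ : Struc τ) (r : ℕ)
    (a₁ : Fin r → A₁.carrier) (a₂ : Fin r → A₂.carrier) : Prop :=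
  ∀ φ : Formula τ r, SigNK τ k n φ → (Sat A₁ φ a₁ ↔ Sat A₂ φ a₂)

namespace QFInterp

variable {σ τ : Vocab}

/-- The universe formula ξ_U applied at variable `i`. -/
def uAt (Ξ : QFInterp σ τ) {n : ℕ} (i : Fin n) : Formula σ n :=
  relabel (fun _ : Fin 1 => i) Ξ.xiU

/-- The universe formula ξ_U applied at the last (just-quantified) variable. -/
def uLast (Ξ : QFInterp σ τ) {n : ℕ} : Formula σ (n+1) :=
  Ξ.uAt (Fin.last n)

/-- Close a pending quantifier-block guard. -/
def closeG {n : ℕ} : Option (Bool × Formula σ n) → Formula σ n → Formula σ n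
  | none, r => r
  | some (true, g), r => g.and r
  | some (false, g), r => g.or r

/-- Block-wise translation Ξ(φ) of a formula under a quantifier-free interpretation,
with an accumulator carrying the pending universe-guard of the current quantifier block:
Ξ(R(z̄)) = ξ_R(z̄) ∧ ⋀ᵢ ξ_U(zᵢ); Ξ(¬R(z̄)) = ¬ξ_R(z̄) ∧ ⋀ᵢ ξ_U(zᵢ) (¬ξ_R in NNF);
Ξ commutes with conjunctions and disjunctions; Ξ(∃x̄ ⋀ᵢφᵢ) = ∃x̄(⋀ⱼ ξ_U(xⱼ) ∧ ⋀ᵢΞ(φᵢ));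
Ξ(∀x̄ ⋁ᵢφᵢ) = ∀x̄((⋁ⱼ ¬ξ_U(xⱼ)) ∨ ⋁ᵢΞ(φᵢ)) (¬ξ_U in NNF). -/
def trA (Ξ : QFInterp σ τ) : ∀ {n : ℕ}, Option (Bool × Formula σ n) → Formula τ n → Formula σ n
  | _, mode, .tru => closeG mode .tru
  | _, mode, .fls => closeG mode .fls
  | _, mode, .rel R ts =>
      closeG mode ((relabel ts (Ξ.xiR R)).and (finAnd (fun i => Ξ.uAt (ts i))))
  | _, mode, .nrel R ts =>
      closeG mode ((nnfNeg (relabel ts (Ξ.xiR R))).and (finAnd (fun i => Ξ.uAt (ts i))))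
  | _, mode, .eq i j => closeG mode ((Formula.eq i j).and ((Ξ.uAt i).and (Ξ.uAt j)))
  | _, mode, .neq i j => closeG mode ((Formula.neq i j).and ((Ξ.uAt i).and (Ξ.uAt j)))
  | _, some (true, g), .iAnd I f =>
      .iAnd (Option I) (fun o => o.elim g (fun i => Ξ.trA none (f i)))
  | _, some (false, g), .iOr I f =>
      .iOr (Option I) (fun o => o.elim g (fun i => Ξ.trA none (f i)))
  | _, mode, .iAnd I f => closeG mode (.iAnd I (fun i => Ξ.trA none (f i)))
  | _, mode, .iOr I f => closeG mode (.iOr I (fun i => Ξ.trA none (f i)))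
  | _, some (true, g), .ex φ =>
      .ex (Ξ.trA (some (true, (relabel Fin.castSucc g).and Ξ.uLast)) φ)
  | _, some (false, g), .all φ =>
      .all (Ξ.trA (some (false, (relabel Fin.castSucc g).or (nnfNeg Ξ.uLast))) φ)
  | _, mode, .ex φ => closeG mode (.ex (Ξ.trA (some (true, Ξ.uLast)) φ))
  | _, mode, .all φ => closeG mode (.all (Ξ.trA (some (false, nnfNeg Ξ.uLast)) φ))

/-- The translation Ξ(φ) of a formula. -/
def translate (Ξ : QFInterp σ τ) {n : ℕ} (φ : Formula τ n) : Formula σ n :=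
  Ξ.trA none φ

/-- The size |Ξ| of an interpretation: the sum of the sizes of its formulae. -/
noncomputable def size [Fintype τ.Rel] (Ξ : QFInterp σ τ) : Cardinal :=
  sizeC Ξ.xiU + ∑ R : τ.Rel, sizeC (Ξ.xiR R)

end QFInterp

/-!
Both sides split into two one-sided halves: the tree-prefix game into the two prefix games in
which the Spoiler opens in `A₁`, resp. `A₂`, and `≡_{(n,k)}` into the two one-way transfers of
tΣ_{(n,k)} formulae. The Duplicator wins the prefix game opened in `A₁` iff every tΣ_{(n,k)}
formula true of `(A₁, ā₁)` is true of `(A₂, ā₂)`. Forward, the Duplicator's reply witnesses the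
leading existential block, and the tΠ formulae below it transfer backwards, being negations of
tΣ formulae. Backward, since τ is finite there is a finite pool of tΣ_{(n,k)} formulae separating
every losing position; a losing opening move `b̄₁` is then detected by the existential closure of
the conjunction of the negations of the pool formulae that fail at `(ā₁, b̄₁)`.
-/

section TreePrefixGame

variable {τ : Vocab} {k n r : ℕ} {A₁ A₂ : Struc τ} {a₁ : Fin r → A₁.carrier}
  {a₂ : Fin r → A₂.carrier}

theorem sat_nnfNeg (A : Struc τ) (φ : Formula τ n) (v : Fin n → A.carrier) :
    Sat A (nnfNeg φ) v ↔ ¬ Sat A φ v := by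
  induction φ with
  | iAnd I f ih => simp only [Sat, nnfNeg, ih, not_forall]
  | iOr I f ih => simp only [Sat, nnfNeg, ih, not_exists]
  | ex φ ih => simp only [Sat, nnfNeg, ih, not_exists]
  | all φ ih => simp only [Sat, nnfNeg, ih, not_forall]
  | _ => simp [Sat, nnfNeg]

theorem sat_exBlock (A : Struc τ) (k : ℕ) (φ : Formula τ (r + k))
    (v : Fin r → A.carrier) :
    Sat A (exBlock k φ) v ↔ ∃ b : Fin k → A.carrier, Sat A φ (Fin.append v b) := by
  induction k with
  | zero => simp [exBlock, Fin.append_right_nil v _ rfl]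
  | succ k ih =>
    rw [exBlock, ih]
    constructor
    · rintro ⟨b, a, h⟩
      exact ⟨Fin.snoc b a, by rwa [Fin.append_snoc]⟩
    · rintro ⟨b, h⟩
      refine ⟨Fin.init b, b (Fin.last k), ?_⟩
      rwa [← Fin.append_snoc, Fin.snoc_init_self]

theorem nnfNeg_exBlock (k : ℕ) (φ : Formula τ (r + k)) :
    nnfNeg (exBlock k φ) = allBlock k (nnfNeg φ) := by
  induction k with
  | zero => rfl
  | succ k ih => exact ih (Formula.ex φ)

theorem nnfNeg_allBlock (k : ℕ) (φ : Formula τ (r + k)) :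
    nnfNeg (allBlock k φ) = exBlock k (nnfNeg φ) := by
  induction k with
  | zero => rfl
  | succ k ih => exact ih (Formula.all φ)

theorem IsQF.nnfNeg {φ : Formula τ r} (h : IsQF φ) : IsQF (nnfNeg φ) := by
  induction h with
  | tru => exact .fls
  | fls => exact .tru
  | rel R ts => exact .nrel R ts
  | nrel R ts => exact .rel R ts
  | eq i j => exact .neq i j
  | neq i j => exact .eq i j
  | iAnd I hI f _ ih => exact .iOr I hI _ ih
  | iOr I hI f _ ih => exact .iAnd I hI _ ih

theorem SigNK.isQF_zero {φ : Formula τ r} (h : SigNK τ k 0 φ) : IsQF φ := by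
  cases h with
  | qf h => exact h
  | blk hn => exact absurd hn (lt_irrefl 0)

theorem SigNK.exists_eq_exBlock {φ : Formula τ r} (h : SigNK τ k (n + 1) φ) :
    ∃ (I : Type) (_ : Finite I) (f : I → Formula τ (r + k)) (n' : I → ℕ),
      (∀ i, n' i ≤ n) ∧ (∀ i, PiNK τ k (n' i) (f i)) ∧ φ = exBlock k (Formula.iAnd I f) := by
  cases h with
  | blk _ I hI f n' hlt hf => exact ⟨I, hI, f, n', fun i => Nat.le_of_lt_succ (hlt i), hf, rfl⟩

mutual
theorem SigNK.nnfNeg {n r : ℕ} {φ : Formula τ r} : SigNK τ k n φ → PiNK τ k n (nnfNeg φ)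
  | .qf h => .qf h.nnfNeg
  | .blk hn I hI f n' hlt hf => by
    rw [nnfNeg_exBlock]
    exact .blk hn I hI _ n' hlt fun i => (hf i).nnfNeg

theorem PiNK.nnfNeg {n r : ℕ} {φ : Formula τ r} : PiNK τ k n φ → SigNK τ k n (nnfNeg φ)
  | .qf h => .qf h.nnfNeg
  | .blk hn I hI f n' hlt hf => by
    rw [nnfNeg_allBlock]
    exact .blk hn I hI _ n' hlt fun i => (hf i).nnfNeg
end

theorem PIso.symm (h : PIso A₁ A₂ r a₁ a₂) : PIso A₂ A₁ r a₂ a₁ :=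
  ⟨fun i j => (h.1 i j).symm, fun R ts => (h.2 R ts).symm⟩

theorem PIso.of_append {b₁ : Fin k → A₁.carrier}
    {b₂ : Fin k → A₂.carrier}
    (h : PIso A₁ A₂ (r + k) (Fin.append a₁ b₁) (Fin.append a₂ b₂)) :
    PIso A₁ A₂ r a₁ a₂ := by
  refine ⟨fun i j => ?_, fun R ts => ?_⟩
  · simpa only [Fin.append_left] using h.1 (Fin.castAdd k i) (Fin.castAdd k j)
  · simpa only [Fin.append_left] using h.2 R (fun l => Fin.castAdd k (ts l))

theorem PIso.sat_iff (h : PIso A₁ A₂ r a₁ a₂) {φ : Formula τ r}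
    (hφ : IsQF φ) : Sat A₁ φ a₁ ↔ Sat A₂ φ a₂ := by
  induction hφ with
  | tru | fls => rfl
  | rel R ts => exact h.2 R ts
  | nrel R ts => exact not_congr (h.2 R ts)
  | eq i j => exact h.1 i j
  | neq i j => exact not_congr (h.1 i j)
  | iAnd I _ f _ ih => exact forall_congr' ih
  | iOr I _ f _ ih => exact exists_congr ih

/-- The nonemptiness hypothesis cannot be dropped: if `A₁` has no `k`-tuple, every longer game is
won vacuously, even when `ā₁ ↦ ā₂` is not a partial isomorphism (e.g. on a nullary relation). -/
theorem DWinPrefix.of_succ (hA₁ : Nonempty (Fin k → A₁.carrier))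
    (h : DWinPrefix k (n + 1) A₁ A₂ r a₁ a₂) : DWinPrefix k n A₁ A₂ r a₁ a₂ := by
  induction n generalizing A₁ A₂ r with
  | zero =>
    obtain ⟨b₁⟩ := hA₁
    obtain ⟨b₂, hb⟩ := h b₁
    exact hb.symm.of_append
  | succ n ih =>
    intro b₁
    obtain ⟨b₂, hb⟩ := h b₁
    exact ⟨b₂, ih ⟨b₂⟩ hb⟩

theorem DWinPrefix.mono {m : ℕ} (hmn : m ≤ n)
    (hA₁ : Nonempty (Fin k → A₁.carrier)) (h : DWinPrefix k n A₁ A₂ r a₁ a₂) :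
    DWinPrefix k m A₁ A₂ r a₁ a₂ := by
  induction n, hmn using Nat.le_induction with
  | base => exact h
  | succ n _ ih => exact ih (h.of_succ hA₁)

theorem TransferNK.sat_of_piNK (h : TransferNK n k A₂ A₁ r a₂ a₁) {φ : Formula τ r}
    (hφ : PiNK τ k n φ) (h₁ : Sat A₁ φ a₁) : Sat A₂ φ a₂ := by
  by_contra h₂
  have := h _ hφ.nnfNeg ((sat_nnfNeg A₂ φ a₂).2 h₂)
  exact (sat_nnfNeg A₁ φ a₁).1 this h₁

theorem DWinPrefix.transferNK (h : DWinPrefix k n A₁ A₂ r a₁ a₂) :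
    TransferNK n k A₁ A₂ r a₁ a₂ := by
  induction n using Nat.strong_induction_on generalizing A₁ A₂ r with
  | _ n ih =>
    intro φ hφ h₁
    cases n with
    | zero => exact (PIso.sat_iff h hφ.isQF_zero).1 h₁
    | succ n =>
      obtain ⟨I, _, f, n', hn', hf, rfl⟩ := hφ.exists_eq_exBlock
      obtain ⟨b₁, hb₁⟩ := (sat_exBlock A₁ k _ a₁).1 h₁
      obtain ⟨b₂, hb⟩ := h b₁
      refine (sat_exBlock A₂ k _ a₂).2 ⟨b₂, fun i => ?_⟩
      have hi := ih (n' i) (Nat.lt_succ_of_le (hn' i)) (hb.mono (hn' i) ⟨b₂⟩)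
      exact hi.sat_of_piNK (hf i) (hb₁ i)

def SigPoolIdx (τ : Vocab) (k : ℕ) : ℕ → ℕ → Type
  | 0, r => ((Fin r × Fin r) ⊕ (Σ R : τ.Rel, Fin (τ.arity R) → Fin r)) × Bool
  | n + 1, r => SigPoolIdx τ k n (r + k) → Prop

/-- A finite pool of tΣ_{(n,k)} formulae that separates every pair of positions from which the
Duplicator loses the `n`-round prefix game. -/
def sigPool (k : ℕ) : ∀ n r, SigPoolIdx τ k n r → Formula τ r
  | 0, _, (.inl (i, j), true) => .eq i j
  | 0, _, (.inl (i, j), false) => .neq i j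
  | 0, _, (.inr ⟨R, ts⟩, true) => .rel R ts
  | 0, _, (.inr ⟨R, ts⟩, false) => .nrel R ts
  | n + 1, r, S => exBlock k (.iAnd {p // S p} fun p => nnfNeg (sigPool k n (r + k) p))

theorem finite_sigPoolIdx [Finite τ.Rel] : ∀ n r, Finite (SigPoolIdx τ k n r)
  | 0, r => inferInstanceAs
      (Finite (((Fin r × Fin r) ⊕ (Σ R : τ.Rel, Fin (τ.arity R) → Fin r)) × Bool))
  | n + 1, r =>
    have : Finite (SigPoolIdx τ k n (r + k)) := finite_sigPoolIdx n (r + k)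
    inferInstanceAs (Finite (SigPoolIdx τ k n (r + k) → Prop))

theorem sigNK_sigPool [Finite τ.Rel] : ∀ n r (p : SigPoolIdx τ k n r),
    SigNK τ k n (sigPool k n r p)
  | 0, _, (.inl (i, j), true) => .qf (.eq i j)
  | 0, _, (.inl (i, j), false) => .qf (.neq i j)
  | 0, _, (.inr ⟨R, ts⟩, true) => .qf (.rel R ts)
  | 0, _, (.inr ⟨R, ts⟩, false) => .qf (.nrel R ts)
  | n + 1, r, _ =>
    have : Finite (SigPoolIdx τ k n (r + k)) := finite_sigPoolIdx n (r + k)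
    .blk n.succ_pos _ Subtype.finite _ (fun _ => n) (fun _ => n.lt_succ_self)
      fun p => (sigNK_sigPool n (r + k) p).nnfNeg

theorem exists_sigPool_of_not_dWinPrefix : ∀ {n : ℕ} {A₁ A₂ : Struc τ} {r : ℕ}
    {a₁ : Fin r → A₁.carrier} {a₂ : Fin r → A₂.carrier}, ¬ DWinPrefix k n A₁ A₂ r a₁ a₂ →
    ∃ p, Sat A₁ (sigPool k n r p) a₁ ∧ ¬ Sat A₂ (sigPool k n r p) a₂
  | 0, A₁, A₂, r, a₁, a₂, h => by
    simp only [DWinPrefix, PIso, not_and_or, not_forall] at h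
    rcases h with ⟨i, j, hij⟩ | ⟨R, ts, hR⟩
    · by_cases h₁ : a₁ i = a₁ j
      · exact ⟨(.inl (i, j), true), h₁, fun h₂ => hij (iff_of_true h₁ h₂)⟩
      · exact ⟨(.inl (i, j), false), h₁, fun h₂ => hij (iff_of_false h₁ h₂)⟩
    · by_cases h₁ : A₁.rel R fun l => a₁ (ts l)
      · exact ⟨(.inr ⟨R, ts⟩, true), h₁, fun h₂ => hR (iff_of_true h₁ h₂)⟩
      · exact ⟨(.inr ⟨R, ts⟩, false), h₁, fun h₂ => hR (iff_of_false h₁ h₂)⟩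
  | n + 1, A₁, A₂, r, a₁, a₂, h => by
    simp only [DWinPrefix, not_forall, not_exists] at h
    obtain ⟨b₁, hb₁⟩ := h
    refine ⟨fun p => ¬ Sat A₁ (sigPool k n (r + k) p) (Fin.append a₁ b₁),
      (sat_exBlock A₁ k _ a₁).2 ⟨b₁, fun p => (sat_nnfNeg ..).2 p.2⟩, fun hS => ?_⟩
    obtain ⟨b₂, hb₂⟩ := (sat_exBlock A₂ k _ a₂).1 hS
    obtain ⟨p, hp₂, hp₁⟩ := exists_sigPool_of_not_dWinPrefix (hb₁ b₂)
    exact (sat_nnfNeg ..).1 (hb₂ ⟨p, hp₁⟩) hp₂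

theorem DWinPrefix.of_transferNK [Finite τ.Rel] (h : TransferNK n k A₁ A₂ r a₁ a₂) :
    DWinPrefix k n A₁ A₂ r a₁ a₂ := by
  by_contra hlose
  obtain ⟨p, h₁, h₂⟩ := exists_sigPool_of_not_dWinPrefix hlose
  exact h₂ (h _ (sigNK_sigPool n r p) h₁)

theorem dWinPrefix_iff_transferNK [Finite τ.Rel] :
    DWinPrefix k n A₁ A₂ r a₁ a₂ ↔ TransferNK n k A₁ A₂ r a₁ a₂ :=
  ⟨DWinPrefix.transferNK, DWinPrefix.of_transferNK⟩

theorem dWinTree_iff :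
    DWinTree k n A₁ A₂ r a₁ a₂ ↔
      DWinPrefix k n A₁ A₂ r a₁ a₂ ∧ DWinPrefix k n A₂ A₁ r a₂ a₁ := by
  cases n with
  | zero => exact ⟨fun h => ⟨h, h.symm⟩, And.left⟩
  | succ n => rfl

theorem equivNK_iff :
    EquivNK n k A₁ A₂ r a₁ a₂ ↔ TransferNK n k A₁ A₂ r a₁ a₂ ∧ TransferNK n k A₂ A₁ r a₂ a₁ := by
  simp only [EquivNK, TransferNK, iff_def, ← forall_and]

end TreePrefixGame

/-- The Duplicator has a winning strategy in the (n,k)-tree-prefix game on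
{(A₁,ā₁),(A₂,ā₂)} iff (A₁,ā₁) and (A₂,ā₂) agree on all tΣ_{(n,k)} formulae φ(x̄) with |x̄| = r. -/
theorem stmt12 (τ : Vocab) [Fintype τ.Rel] (n k r : ℕ) (A₁ A₂ : Struc τ)
    (a₁ : Fin r → A₁.carrier) (a₂ : Fin r → A₂.carrier) :
    DWinTree k n A₁ A₂ r a₁ a₂ ↔ EquivNK n k A₁ A₂ r a₁ a₂ := by
  rw [dWinTree_iff, equivNK_iff, dWinPrefix_iff_transferNK, dWinPrefix_iff_transferNK]

end FV
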